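/- arXiv:cs/0608104 — 3 statements merged into one kernel-verified Lean document; each statement's English description precedes it below -/
import Mathlib

section
/- Under the order ⊑G, the union G ⊎ G' is the greatest lower bound of G and G': G ⊎ G' ⊑G G, G ⊎ G' ⊑G G', and for every access graph H with H ⊑G G and H ⊑G G', we have H ⊑G G ⊎ G'. -/
structure AccessGraph (α : Type*) [DecidableEq α] where
  NF : Finset α
  NI : Finset α
  E : Finset (α × α)
  disj : Disjoint NF NI

namespace AccessGraph

variable {α : Type*} [DecidableEq α]

/-- G ⊑G G' iff N'_F ⊆ N_F, N'_I ⊆ N_F ∪ N_I, and E' ⊆ E. -/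
def le (G G' : AccessGraph α) : Prop :=
  G'.NF ⊆ G.NF ∧ G'.NI ⊆ G.NF ∪ G.NI ∧ G'.E ⊆ G.E

def union (G G' : AccessGraph α) : AccessGraph α :=
  ⟨G.NF ∪ G'.NF, (G.NI ∪ G'.NI) \ (G.NF ∪ G'.NF), G.E ∪ G'.E, by
    exact Finset.disjoint_sdiff⟩

/-- Under ⊑G, the union G ⊎ G' is the greatest lower bound of G and G'. -/
theorem union_isGLB (G G' : AccessGraph α) :
    le (union G G') G ∧ le (union G G') G' ∧
    ∀ H : AccessGraph α, le H G → le H G' → le H (union G G') := by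
  refine ⟨⟨?_, ?_, ?_⟩, ⟨?_, ?_, ?_⟩, ?_⟩
  · intro x hx; simp [union, hx]
  · intro x hx; simp [union]
    by_cases hf : x ∈ G.NF ∪ G'.NF
    · simp at hf; tauto
    · simp at hf; tauto
  · intro x hx; simp [union, hx]
  · intro x hx; simp [union, hx]
  · intro x hx; simp [union]
    by_cases hf : x ∈ G.NF ∪ G'.NF
    · simp at hf; tauto
    · simp at hf; tauto
  · intro x hx; simp [union, hx]
  · rintro H ⟨h1, h2, h3⟩ ⟨h1', h2', h3'⟩
    refine ⟨?_, ?_, ?_⟩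
    · intro x hx; simp [union] at hx
      rcases hx with h | h
      · exact h1 h
      · exact h1' h
    · intro x hx; simp [union] at hx ⊢
      rcases hx with ⟨h | h, hnf⟩
      · rcases Finset.mem_union.mp (h2 h) with hh | hh
        · exact Or.inl hh
        · exact Or.inr hh
      · rcases Finset.mem_union.mp (h2' h) with hh | hh
        · exact Or.inl hh
        · exact Or.inr hh
    · intro x hx; simp [union] at hx
      rcases hx with h | h
      · exact h3 h
      · exact h3' h

end AccessGraph
end

section
/- The set of explicitly live access paths at any program point is prefix-closed: if ρ→σ belongs to Liveness_p then every nonempty prefix of ρ→σ also belongs to Liveness_p. -/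
/-- Access paths are modelled as (nonempty) lists of names:
a root variable followed by field names. -/
abbrev APath := List ℕ

/-- A set of access paths is prefix-closed if it contains every
nonempty prefix of each of its members. -/
def PrefixClosed (S : Set APath) : Prop :=
  ∀ ρ ∈ S, ∀ p : APath, p <+: ρ → p ≠ [] → p ∈ S

/-- All nonempty prefixes of an access path. -/
def prefixesOf (ρ : APath) : Set APath := {p | p <+: ρ ∧ p ≠ []}

/-- Statements: an assignment α_x = α_y (with access paths ρ_x, ρ_y), or any
other statement kind, which kills nothing, transfers nothing and directly
generates a set D of access paths. -/
inductive Stm where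
  | assign (ρx ρy : APath)
  | other (D : Set APath)

/-- The liveness flow function StatementLiveness_s(X) = (X − LKill_s) ∪ LDirect_s ∪
LTransfer_s(X).  For an assignment α_x = α_y: LKill = {ρ_x→*},
LDirect = Prefixes(Base(ρ_x)) ∪ Prefixes(Base(ρ_y)),
LTransfer(X) = {ρ_y→σ | ρ_x→σ ∈ X}. -/
def flow : Stm → Set APath → Set APath
  | .assign ρx ρy, X =>
      (X \ {ρ | ρx <+: ρ}) ∪ prefixesOf ρx.dropLast ∪ prefixesOf ρy.dropLast
        ∪ {ρ | ∃ σ, ρ = ρy ++ σ ∧ ρx ++ σ ∈ X}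
  | .other D, X => X ∪ D

/-- Well-formedness: access paths of an assignment are nonempty; the directly
generated set of any other statement is prefix-closed. -/
def StmWF : Stm → Prop
  | .assign ρx ρy => ρx ≠ [] ∧ ρy ≠ []
  | .other D => PrefixClosed D

/-- PathLiveness along a control flow path (a list of statements),
computed backwards from the boundary value B at Exit. -/
def pathLive (B : Set APath) : List Stm → Set APath
  | [] => B
  | s :: rest => flow s (pathLive B rest)

lemma prefix_dropLast_of_strict {p q : APath} (h : p <+: q) (hne : p ≠ q) :
    p <+: q.dropLast := by
  obtain ⟨r, rfl⟩ := h
  cases r with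
  | nil => simp at hne
  | cons a t =>
      rw [List.dropLast_append_of_ne_nil (List.cons_ne_nil a t)]
      exact ⟨_, rfl⟩

lemma flow_pc {s : Stm} {X : Set APath} (hs : StmWF s) (hX : PrefixClosed X) :
    PrefixClosed (flow s X) := by
  cases s with
  | other D =>
      intro ρ hρ p hp hpne
      rcases hρ with hρ | hρ
      · exact Or.inl (hX ρ hρ p hp hpne)
      · exact Or.inr (hs ρ hρ p hp hpne)
  | assign ρx ρy =>
      obtain ⟨hx, hy⟩ := hs
      intro ρ hρ p hp hpne
      rcases hρ with ((hρ | hρ) | hρ) | hρ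
      · -- X minus kill
        refine Or.inl (Or.inl (Or.inl ⟨hX ρ hρ.1 p hp hpne, ?_⟩))
        intro hk
        exact hρ.2 (hk.trans hp)
      · exact Or.inl (Or.inl (Or.inr ⟨hp.trans hρ.1, hpne⟩))
      · exact Or.inl (Or.inr ⟨hp.trans hρ.1, hpne⟩)
      · obtain ⟨σ, rfl, hσ⟩ := hρ
        rcases (List.prefix_or_prefix_of_prefix hp (ρy.prefix_append σ)) with hpy | hyp
        · by_cases hpe : p = ρy
          · refine Or.inr ⟨[], by simp [hpe], ?_⟩
            simpa using hX _ hσ ρx (ρx.prefix_append σ) hx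
          · exact Or.inl (Or.inr ⟨prefix_dropLast_of_strict hpy hpe, hpne⟩)
        · obtain ⟨τ, rfl⟩ := hyp
          refine Or.inr ⟨τ, rfl, ?_⟩
          have hτ : τ <+: σ := by
            have := hp
            rwa [List.prefix_append_right_inj] at this
          exact hX _ hσ (ρx ++ τ) ((List.prefix_append_right_inj ρx).mpr hτ)
            (by simp [hx])

lemma pathLive_pc (B : Set APath) (hB : PrefixClosed B) :
    ∀ ψ : List Stm, (∀ s ∈ ψ, StmWF s) → PrefixClosed (pathLive B ψ) := by
  intro ψ
  induction ψ with
  | nil => intro _; exact hB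
  | cons s rest ih =>
      intro h
      exact flow_pc (h s (by simp)) (ih fun t ht => h t (List.mem_cons_of_mem _ ht))

/-- The set of explicitly live access paths at a program point,
Liveness_p = ⋃_{ψ ∈ Paths(p)} PathLiveness_p^ψ, is prefix-closed. -/
theorem liveness_prefixClosed (B : Set APath) (Ψ : Set (List Stm))
    (hB : PrefixClosed B) (hΨ : ∀ ψ ∈ Ψ, ∀ s ∈ ψ, StmWF s) :
    PrefixClosed (⋃ ψ ∈ Ψ, pathLive B ψ) := by
  intro ρ hρ p hp hpne
  simp only [Set.mem_iUnion] at hρ ⊢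
  obtain ⟨ψ, hψ, hρ⟩ := hρ
  exact ⟨ψ, hψ, pathLive_pc B hB ψ (hΨ ψ hψ) ρ hρ p hp hpne⟩
end

section
/- The correspondence relation ACN(G,G') between nodes of two access graphs with the same root, defined as the least relation containing the pair of entry nodes and closed under matching edges with equal field labels, relates node n to node n' iff there exists an access path ρ represented both by a path from the entry of G to n and by a path from the entry of G' to n'. -/
/-- An access graph: a rooted directed graph. Node fields are given by a labelling
function into `Option ℕ`, where `none` denotes the summary node n_* which matches
every field name, and `some f` denotes field name f. -/
structure AGr (ν : Type*) where
  entry : ν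
  edges : Set (ν × ν)

/-- A node's field component matches field name f. -/
def FMatch (o : Option ℕ) (f : ℕ) : Prop := o = none ∨ o = some f

/-- Field(n) = Field(n'), where the summary node matches any field name. -/
def FieldEq (a b : Option ℕ) : Prop := a = none ∨ b = none ∨ a = b

/-- `Reaches fl G n ρ`: there is a path from the entry of G to node n representing
the access path (field sequence) ρ. -/
inductive Reaches {ν : Type*} (fl : ν → Option ℕ) (G : AGr ν) : ν → List ℕ → Prop
  | entry : Reaches fl G G.entry []
  | step {n m : ν} {σ : List ℕ} {f : ℕ} :
      Reaches fl G n σ → (n, m) ∈ G.edges → FMatch (fl m) f →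
      Reaches fl G m (σ ++ [f])

/-- The correspondence relation ACN(G,G'): the least relation containing the pair
of entry nodes and closed under matching edges with equal field labels. -/
inductive ACN {ν ν' : Type*} (fl : ν → Option ℕ) (fl' : ν' → Option ℕ)
    (G : AGr ν) (G' : AGr ν') : ν → ν' → Prop
  | entry : ACN fl fl' G G' G.entry G'.entry
  | step {n m : ν} {n' m' : ν'} :
      ACN fl fl' G G' n n' → (n, m) ∈ G.edges → (n', m') ∈ G'.edges →
      FieldEq (fl m) (fl' m') → ACN fl fl' G G' m m'


lemma FieldEq.common_match {a b : Option ℕ} (h : FieldEq a b) :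
    ∃ f, FMatch a f ∧ FMatch b f := by
  rcases h with h | h | h
  · subst h
    cases b with
    | none => exact ⟨0, Or.inl rfl, Or.inl rfl⟩
    | some g => exact ⟨g, Or.inl rfl, Or.inr rfl⟩
  · subst h
    cases a with
    | none => exact ⟨0, Or.inl rfl, Or.inl rfl⟩
    | some g => exact ⟨g, Or.inr rfl, Or.inl rfl⟩
  · subst h
    cases a with
    | none => exact ⟨0, Or.inl rfl, Or.inl rfl⟩
    | some g => exact ⟨g, Or.inr rfl, Or.inr rfl⟩

lemma Reaches.nil_inv {ν : Type*} {fl : ν → Option ℕ} {G : AGr ν}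
    {m : ν} {ρ : List ℕ} (h : Reaches fl G m ρ) (hρ : ρ = []) : m = G.entry := by
  cases h with
  | entry => rfl
  | step h1 h2 h3 => simp at hρ

lemma Reaches.snoc_inv {ν : Type*} {fl : ν → Option ℕ} {G : AGr ν}
    {m : ν} {ρ σ : List ℕ} {f : ℕ} (h : Reaches fl G m ρ) (hρ : ρ = σ ++ [f]) :
    ∃ n, Reaches fl G n σ ∧ (n, m) ∈ G.edges ∧ FMatch (fl m) f := by
  cases h with
  | entry => simp at hρ
  | @step n _ σ' f' h1 h2 h3 =>
      obtain ⟨hσ, hf⟩ := List.append_inj' hρ rfl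
      obtain rfl : f' = f := by simpa using hf
      exact ⟨n, hσ ▸ h1, h2, h3⟩

/-- ACN(G,G') relates n to n' iff some access path ρ is represented both by a path
from the entry of G to n and by a path from the entry of G' to n'. -/
theorem ACN_iff_common_access_path {ν ν' : Type*}
    (fl : ν → Option ℕ) (fl' : ν' → Option ℕ) (G : AGr ν) (G' : AGr ν')
    (n : ν) (n' : ν') :
    ACN fl fl' G G' n n' ↔ ∃ ρ : List ℕ, Reaches fl G n ρ ∧ Reaches fl' G' n' ρ := by
  constructor
  · intro h
    induction h with
    | entry => exact ⟨[], Reaches.entry, Reaches.entry⟩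
    | step _ e e' hfe ih =>
        obtain ⟨ρ, r, r'⟩ := ih
        obtain ⟨f, hf, hf'⟩ := hfe.common_match
        exact ⟨ρ ++ [f], r.step e hf, r'.step e' hf'⟩
  · rintro ⟨ρ, r, r'⟩
    induction ρ using List.reverseRecOn generalizing n n' with
    | nil =>
        obtain rfl := r.nil_inv rfl
        obtain rfl := r'.nil_inv rfl
        exact ACN.entry
    | append_singleton σ f ih =>
        obtain ⟨p, rp, ep, mp⟩ := r.snoc_inv rfl
        obtain ⟨p', rp', ep', mp'⟩ := r'.snoc_inv rfl
        refine (ih _ _ rp rp').step ep ep' ?_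
        rcases mp with h | h <;> rcases mp' with h' | h'
        · exact Or.inl h
        · exact Or.inl h
        · exact Or.inr (Or.inl h')
        · exact Or.inr (Or.inr (h.trans h'.symm))
end
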